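/- The map T ↦ w(T) on admissible r×N fillings is injective: if T and T' are admissible r×N fillings with w(T) = w(T'), then T = T'. -/

import Mathlib

/-- The symbols `1`, `0`, `∗` used in fillings. -/
inductive Symb : Type
  | one : Symb
  | zero : Symb
  | star : Symb
deriving DecidableEq

/-- An admissible filling of the `r × N` grid (rows indexed top-to-bottom by `Fin r`,
columns left-to-right by `Fin N`): every row and every column contains at most one `1`,
every cell strictly below a `1` in the same column is `∗`, and every other cell is `0`
(i.e. every `∗` lies strictly below a `1` in its column). -/
def IsAdmissible {r N : ℕ} (T : Fin r → Fin N → Symb) : Prop :=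
  (∀ (i : Fin r) (j j' : Fin N), T i j = Symb.one → T i j' = Symb.one → j = j') ∧
  (∀ (j : Fin N) (i i' : Fin r), T i j = Symb.one → T i' j = Symb.one → i = i') ∧
  (∀ (i i' : Fin r) (j : Fin N), T i j = Symb.one → i < i' → T i' j = Symb.star) ∧
  (∀ (i : Fin r) (j : Fin N), T i j = Symb.star → ∃ i' : Fin r, i' < i ∧ T i' j = Symb.one)

/-- `σ(T)_j`: the number of cells labeled `0` in the `j`-th column of `T`. -/
def colZeros {r N : ℕ} (T : Fin r → Fin N → Symb) (j : Fin N) : ℕ :=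
  (Finset.univ.filter (fun i => T i j = Symb.zero)).card

/-- `v(T)_j = 1` iff the `j`-th column of `T` is occupied (contains a `1`). -/
def vFun {r N : ℕ} (T : Fin r → Fin N → Symb) (j : Fin N) : Bool :=
  decide (∃ i : Fin r, T i j = Symb.one)

/-- The binary sequence `v(T)` as a list. -/
def vList {r N : ℕ} (T : Fin r → Fin N → Symb) : List Bool :=
  (List.finRange N).map (vFun T)

/-- The binary sequence `w(T)`: read the entries of `T` from left to right along each row,
taking the rows from bottom to top, skipping all cells labeled `∗` (with `1 ↦ true`,
`0 ↦ false`). -/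
def wList {r N : ℕ} (T : Fin r → Fin N → Symb) : List Bool :=
  ((List.finRange r).reverse.map (fun i =>
    (List.finRange N).filterMap (fun j =>
      match T i j with
      | Symb.one => some true
      | Symb.zero => some false
      | Symb.star => none))).flatten

/-- Read a single row, restricted to columns satisfying `p`, skipping stars. -/
def rowRead {N : ℕ} (p : Fin N → Bool) (g : Fin N → Symb) : List Bool :=
  ((List.finRange N).filter p).filterMap (fun j =>
    match g j with
    | Symb.one => some true
    | Symb.zero => some false
    | Symb.star => none)

def wL {r N : ℕ} (p : Fin N → Bool) (T : Fin r → Fin N → Symb) : List Bool :=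
  ((List.finRange r).reverse.map (fun i => rowRead p (T i))).flatten

lemma filterMap_filter_eq {α β : Type*} (q : α → Bool) (f : α → Option β) :
    ∀ (l : List α), (∀ a ∈ l, q a = false → f a = none) →
      (l.filter q).filterMap f = l.filterMap f := by
  intro l
  induction l with
  | nil => intro _; simp
  | cons a l ih =>
    intro h
    by_cases hqa : q a = true
    · simp only [List.filter_cons, hqa, if_true, List.filterMap_cons]
      rw [ih (fun b hb => h b (List.mem_cons_of_mem _ hb))]
    · have hq' : q a = false := by simpa using hqa
      have := h a List.mem_cons_self hq'
      simp [List.filter_cons, hq', List.filterMap_cons, this,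
        ih (fun b hb => h b (List.mem_cons_of_mem _ hb))]

lemma wL_succ {r N : ℕ} (p : Fin N → Bool) (T : Fin (r+1) → Fin N → Symb) :
    wL p T = wL p (fun i => T i.succ) ++ rowRead p (T 0) := by
  simp [wL, List.finRange_succ, Function.comp_def]

theorem key (r : ℕ) {N : ℕ} (p : Fin N → Bool) (T T' : Fin r → Fin N → Symb)
    (h3 : ∀ i i' j, p j = true → T i j = Symb.one → i < i' → T i' j = Symb.star)
    (h4 : ∀ i j, p j = true → T i j = Symb.star → ∃ i', i' < i ∧ T i' j = Symb.one)
    (h3' : ∀ i i' j, p j = true → T' i j = Symb.one → i < i' → T' i' j = Symb.star)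
    (h4' : ∀ i j, p j = true → T' i j = Symb.star → ∃ i', i' < i ∧ T' i' j = Symb.one)
    (hw : wL p T = wL p T') : ∀ i j, p j = true → T i j = T' i j := by
  induction r generalizing N with
  | zero => intro i; exact absurd i.2 (by simp)
  | succ r ih =>
    have nostar : ∀ j, p j = true → T 0 j ≠ Symb.star := by
      intro j hj hs
      obtain ⟨i', hi', _⟩ := h4 0 j hj hs
      exact absurd hi' (by simp [Fin.lt_iff_val_lt_val])
    have nostar' : ∀ j, p j = true → T' 0 j ≠ Symb.star := by
      intro j hj hs
      obtain ⟨i', hi', _⟩ := h4' 0 j hj hs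
      exact absurd hi' (by simp [Fin.lt_iff_val_lt_val])
    have rowmap : ∀ (g : Fin N → Symb), (∀ j, p j = true → g j ≠ Symb.star) →
        rowRead p g = ((List.finRange N).filter p).map
          (fun j => match g j with | Symb.one => true | _ => false) := by
      intro g hg
      unfold rowRead
      have hc : ∀ j ∈ (List.finRange N).filter p,
          (match g j with
            | Symb.one => some true | Symb.zero => some false | Symb.star => none)
          = some (match g j with | Symb.one => true | _ => false) := by
        intro j hj
        have hpj : p j = true := (List.mem_filter.mp hj).2
        cases hgj : g j with
        | one => simp
        | zero => simp
        | star => exact absurd hgj (hg j hpj)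
      rw [List.filterMap_congr hc]
      exact congrFun List.filterMap_eq_map _
    rw [wL_succ, wL_succ] at hw
    have hlen : (rowRead p (T 0)).length = (rowRead p (T' 0)).length := by
      rw [rowmap _ nostar, rowmap _ nostar']
      simp
    obtain ⟨hA, hB⟩ := List.append_inj' hw hlen
    have row0 : ∀ j, p j = true → T 0 j = T' 0 j := by
      intro j hj
      rw [rowmap _ nostar, rowmap _ nostar'] at hB
      have hmem : j ∈ (List.finRange N).filter p := by
        simp [List.mem_filter, hj]
      have heq : (match T 0 j with | Symb.one => true | _ => false) =
          (match T' 0 j with | Symb.one => true | _ => false) :=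
        List.map_inj_left.mp hB j hmem
      cases h1 : T 0 j <;> cases h2 : T' 0 j <;>
        first
        | rfl
        | (exact absurd h1 (nostar j hj))
        | (exact absurd h2 (nostar' j hj))
        | (rw [h1, h2] at heq; simp at heq)
    set q : Fin N → Bool := fun j => p j && !(decide (T 0 j = Symb.one)) with hq
    have hqp : ∀ j, q j = true → p j = true := by
      intro j hj; rw [hq] at hj; simp at hj; exact hj.1
    have hqone : ∀ j, q j = true → T 0 j ≠ Symb.one := by
      intro j hj; rw [hq] at hj; simp at hj; exact hj.2
    have hqfalse : ∀ j, p j = true → q j = false → T 0 j = Symb.one := by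
      intro j hj hqj
      rw [hq] at hqj; simp [hj] at hqj; exact hqj
    -- rowRead p = rowRead q for a row all of whose entries over one-columns are stars
    have rowq : ∀ (S : Fin N → Symb),
        (∀ j, p j = true → T 0 j = Symb.one → S j = Symb.star) →
        rowRead p S = rowRead q S := by
      intro S hS
      unfold rowRead
      have hfq : (List.finRange N).filter q
          = ((List.finRange N).filter p).filter (fun j => !(decide (T 0 j = Symb.one))) := by
        rw [List.filter_filter]
        apply List.filter_congr
        intro j _
        rw [hq]
        rw [Bool.and_comm]
      rw [hfq]
      refine (filterMap_filter_eq _ _ _ ?_).symm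
      intro j hj hfj
      have hpj : p j = true := (List.mem_filter.mp hj).2
      have hone : T 0 j = Symb.one := by simpa using hfj
      simp [hS j hpj hone]
    have hwq : wL q (fun i => T i.succ) = wL q (fun i => T' i.succ) := by
      have e1 : wL p (fun i => T i.succ) = wL q (fun i => T i.succ) := by
        unfold wL
        congr 1
        apply List.map_congr_left
        intro i _
        exact rowq _ (fun j hpj hone => h3 0 i.succ j hpj hone (Fin.succ_pos i))
      have e2 : wL p (fun i => T' i.succ) = wL q (fun i => T' i.succ) := by
        unfold wL
        congr 1
        apply List.map_congr_left
        intro i _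
        exact rowq _ (fun j hpj hone =>
          h3' 0 i.succ j hpj ((row0 j hpj) ▸ hone) (Fin.succ_pos i))
      rw [← e1, ← e2, hA]
    have hlow := ih q (fun i => T i.succ) (fun i => T' i.succ)
      (fun i i' j hj hone hlt =>
        h3 i.succ i'.succ j (hqp j hj) hone (Fin.succ_lt_succ_iff.mpr hlt))
      (by
        intro i j hj hs
        obtain ⟨i'', hi'', hone⟩ := h4 i.succ j (hqp j hj) hs
        rcases Fin.eq_zero_or_eq_succ i'' with h0 | ⟨k, rfl⟩
        · exact absurd (h0 ▸ hone) (hqone j hj)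
        · exact ⟨k, Fin.succ_lt_succ_iff.mp hi'', hone⟩)
      (fun i i' j hj hone hlt =>
        h3' i.succ i'.succ j (hqp j hj) hone (Fin.succ_lt_succ_iff.mpr hlt))
      (by
        intro i j hj hs
        obtain ⟨i'', hi'', hone⟩ := h4' i.succ j (hqp j hj) hs
        rcases Fin.eq_zero_or_eq_succ i'' with h0 | ⟨k, rfl⟩
        · exact absurd (h0 ▸ hone) ((row0 j (hqp j hj)) ▸ hqone j hj)
        · exact ⟨k, Fin.succ_lt_succ_iff.mp hi'', hone⟩)
      hwq
    intro i j hpj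
    induction i using Fin.cases with
    | zero => exact row0 j hpj
    | succ i =>
      by_cases hone : T 0 j = Symb.one
      · rw [h3 0 i.succ j hpj hone (Fin.succ_pos i),
          h3' 0 i.succ j hpj ((row0 j hpj) ▸ hone) (Fin.succ_pos i)]
      · have hqj : q j = true := by
          rw [hq]; simp [hpj, hone]
        exact hlow i j hqj

/-- The map `T ↦ w(T)` on admissible `r × N` fillings is injective. -/
theorem filling_w_injective (r N : ℕ) (hr : 1 ≤ r)
    (T T' : Fin r → Fin N → Symb) (hT : IsAdmissible T) (hT' : IsAdmissible T')
    (h : wList T = wList T') : T = T' := by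
  have hw : wL (fun _ => true) T = wL (fun _ => true) T' := by
    have e : ∀ (S : Fin r → Fin N → Symb), wL (fun _ => true) S = wList S := by
      intro S
      unfold wL wList rowRead
      simp
    rw [e, e, h]
  funext i j
  exact key r (fun _ => true) T T'
    (fun i i' j _ => hT.2.2.1 i i' j)
    (fun i j _ => hT.2.2.2 i j)
    (fun i i' j _ => hT'.2.2.1 i i' j)
    (fun i j _ => hT'.2.2.2 i j)
    hw i j rfl
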